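/- Let c ∈ [0,1), f : ℝ → ℝ continuous with t·f(t) ≥ 0 for all t, and suppose there exist t₀ > 0 and a ≤ 1 with |f(t)| ≤ a|t| for all |t| ≥ t₀. Then every nonoscillatory solution (x_n) of x_{n+1} = c·x_n + f(x_n − x_{n−1}) satisfies x_n·(x_{n+1} − x_n) < 0 eventually. -/

import Mathlib

/-!
If `x n > 0` and `x (n + 1) ≥ x n`, the equation forces `f (x n - x (n - 1)) > 0`, hence
`x n > x (n - 1)`: a nondecreasing step propagates backwards. So if a positive solution failed
to be eventually decreasing it would be nondecreasing from some index on. Since `f d ≤ max d M`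
for `d ≥ 0` (`a ≤ 1` for large `d`, compactness for small `d`), the differences of such a
solution stay bounded, and then so does the solution. It would converge to some `L > 0`, and
passing to the limit in the equation gives `f 0 = (1 - c) L > 0`, contradicting the sign
condition. Negative solutions reduce to positive ones via `x ↦ -x`, `f ↦ -f (- ·)`.
-/

open Filter Set Topology

lemma map_nonpos_of_nonpos {f : ℝ → ℝ} (hf : Continuous f) (hsign : ∀ t, 0 ≤ t * f t)
    {t : ℝ} (ht : t ≤ 0) : f t ≤ 0 := by
  rcases ht.lt_or_eq with ht | rfl
  · exact nonpos_of_mul_nonneg_right (hsign t) ht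
  · refine le_of_tendsto (hf.continuousWithinAt (s := Iio 0)).tendsto ?_
    exact eventually_nhdsWithin_of_forall fun t ht => nonpos_of_mul_nonneg_right (hsign t) ht

lemma exists_le_max_of_abs_le {f : ℝ → ℝ} {a t₀ : ℝ} (hf : Continuous f) (ha1 : a ≤ 1)
    (hfb : ∀ t, t₀ ≤ |t| → |f t| ≤ a * |t|) : ∃ M, ∀ d, 0 ≤ d → f d ≤ max d M := by
  obtain ⟨M, hM⟩ := isCompact_Icc.bddAbove_image (hf.continuousOn (s := Icc 0 t₀))
  refine ⟨M, fun d hd => ?_⟩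
  rcases le_total d t₀ with hsmall | hlarge
  · exact (hM (mem_image_of_mem f ⟨hd, hsmall⟩)).trans (le_max_right _ _)
  · have hfd := hfb d (by rwa [abs_of_nonneg hd])
    rw [abs_of_nonneg hd] at hfd
    calc f d ≤ |f d| := le_abs_self _
      _ ≤ a * d := hfd
      _ ≤ d := by nlinarith
      _ ≤ max d M := le_max_left _ _

/-- The equation `x (n + 1) = c x n + f (x n - x (n - 1))`, `n ≥ 1`, shifted by one index. -/
def IsSolution (c : ℝ) (f : ℝ → ℝ) (x : ℕ → ℝ) : Prop :=
  ∀ n, x (n + 2) = c * x (n + 1) + f (x (n + 1) - x n)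

namespace IsSolution

variable {c : ℝ} {f : ℝ → ℝ} {x : ℕ → ℝ}

lemma shift (hx : IsSolution c f x) (N : ℕ) : IsSolution c f fun k => x (N + k) :=
  fun k => hx (N + k)

lemma neg (hx : IsSolution c f x) : IsSolution c (fun t => -f (-t)) fun n => -x n :=
  fun n => by simp only [hx n, neg_sub_neg, neg_sub]; ring

lemma map_zero_eq (hx : IsSolution c f x) (hf : Continuous f) {L : ℝ}
    (hL : Tendsto x atTop (𝓝 L)) : f 0 = (1 - c) * L := by
  have hd : Tendsto (fun n => x (n + 1) - x n) atTop (𝓝 0) := by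
    simpa using (hL.comp (tendsto_add_atTop_nat 1)).sub hL
  have hlim : Tendsto (fun n => x (n + 2) - c * x (n + 1)) atTop (𝓝 (L - c * L)) :=
    (hL.comp (tendsto_add_atTop_nat 2)).sub ((hL.comp (tendsto_add_atTop_nat 1)).const_mul c)
  have hfd : Tendsto (fun n => x (n + 2) - c * x (n + 1)) atTop (𝓝 (f 0)) :=
    ((hf.tendsto 0).comp hd).congr fun n => by simp [hx n]
  rw [tendsto_nhds_unique hfd hlim]
  ring

lemma lt_succ_of_succ_le_succ_succ (hx : IsSolution c f x) (hc1 : c < 1)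
    (hf_nonpos : ∀ t ≤ 0, f t ≤ 0) {n : ℕ} (hpos : 0 < x (n + 1))
    (hle : x (n + 1) ≤ x (n + 2)) : x n < x (n + 1) := by
  by_contra! h
  have := hf_nonpos _ (sub_nonpos.2 h)
  rw [hx n] at hle
  nlinarith

lemma monotone_of_frequently_le_succ (hx : IsSolution c f x) (hc1 : c < 1)
    (hf_nonpos : ∀ t ≤ 0, f t ≤ 0) (hpos : ∀ n, 0 < x n)
    (hfreq : ∃ᶠ n in atTop, x n ≤ x (n + 1)) : Monotone x :=
  monotone_nat_of_le_succ <| Nat.decreasing_induction_of_infinite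
    (fun _ h => (hx.lt_succ_of_succ_le_succ_succ hc1 hf_nonpos (hpos _) h).le)
    (Nat.frequently_atTop_iff_infinite.1 hfreq)

lemma bddAbove_range_of_monotone (hx : IsSolution c f x) (hc1 : c < 1) {M : ℝ}
    (hM : ∀ d, 0 ≤ d → f d ≤ max d M) (hpos : ∀ n, 0 < x n) (hmono : Monotone x) :
    BddAbove (range x) := by
  set B := max (x 1 - x 0) M
  have hd : ∀ n, 0 ≤ x (n + 1) - x n := fun n => sub_nonneg.2 (hmono n.le_succ)
  have hdB : ∀ n, x (n + 1) - x n ≤ B := by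
    intro n
    induction n with
    | zero => exact le_max_left _ _
    | succ n ih =>
      calc x (n + 2) - x (n + 1) ≤ f (x (n + 1) - x n) := by rw [hx n]; nlinarith [hpos (n + 1)]
        _ ≤ max (x (n + 1) - x n) M := hM _ (hd n)
        _ ≤ B := max_le ih (le_max_right _ _)
  refine ⟨B / (1 - c), ?_⟩
  rintro _ ⟨n, rfl⟩
  have hstep : (1 - c) * x (n + 1) ≤ B := by
    have hB : max (x (n + 1) - x n) M ≤ B := max_le (hdB n) (le_max_right _ _)
    linarith [hx n, hd (n + 1), hM _ (hd n)]
  rw [le_div_iff₀ (by linarith)]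
  nlinarith [hmono n.le_succ]

lemma eventually_lt_of_pos (hx : IsSolution c f x) (hc1 : c < 1) (hf : Continuous f)
    (hsign : ∀ t, 0 ≤ t * f t) {a t₀ : ℝ} (ha1 : a ≤ 1)
    (hfb : ∀ t, t₀ ≤ |t| → |f t| ≤ a * |t|) (hpos : ∀ n, 0 < x n) :
    ∀ᶠ n in atTop, x (n + 1) < x n := by
  have hf_nonpos : ∀ t ≤ 0, f t ≤ 0 := fun t => map_nonpos_of_nonpos hf hsign
  by_contra h
  have hmono : Monotone x := hx.monotone_of_frequently_le_succ hc1 hf_nonpos hpos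
    (by simpa only [not_eventually, not_lt] using h)
  obtain ⟨M, hM⟩ := exists_le_max_of_abs_le hf ha1 hfb
  have hL := tendsto_atTop_ciSup hmono (hx.bddAbove_range_of_monotone hc1 hM hpos hmono)
  have hL0 : 0 < ⨆ n, x n := (hpos 0).trans_le (hmono.ge_of_tendsto hL 0)
  have h0 := hx.map_zero_eq hf hL
  nlinarith [hf_nonpos 0 le_rfl]

lemma eventually_mul_sub_neg (hx : IsSolution c f x) (hc1 : c < 1) (hf : Continuous f)
    (hsign : ∀ t, 0 ≤ t * f t) {a t₀ : ℝ} (ha1 : a ≤ 1)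
    (hfb : ∀ t, t₀ ≤ |t| → |f t| ≤ a * |t|) (hpos : ∀ᶠ n in atTop, 0 < x n) :
    ∀ᶠ n in atTop, x n * (x (n + 1) - x n) < 0 := by
  obtain ⟨N, hN⟩ := eventually_atTop.1 hpos
  obtain ⟨K, hK⟩ := eventually_atTop.1 <|
    (hx.shift N).eventually_lt_of_pos hc1 hf hsign ha1 hfb fun k => hN _ (N.le_add_right k)
  refine eventually_atTop.2 ⟨N + K, fun n hn => ?_⟩
  obtain ⟨k, rfl⟩ := Nat.exists_eq_add_of_le (le_of_add_le_left hn)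
  exact mul_neg_of_pos_of_neg (hN _ (N.le_add_right k)) (sub_neg.2 (hK k (by omega)))

end IsSolution

theorem stmt12_general (c a t₀ : ℝ) (hc1 : c < 1) (f : ℝ → ℝ)
    (hf : Continuous f) (hsign : ∀ t : ℝ, 0 ≤ t * f t)
    (ha1 : a ≤ 1)
    (hfb : ∀ t : ℝ, t₀ ≤ |t| → |f t| ≤ a * |t|) (x : ℕ → ℝ)
    (hx : ∀ n : ℕ, 1 ≤ n → x (n + 1) = c * x n + f (x n - x (n - 1)))
    (hnonosc : (∃ N : ℕ, ∀ n : ℕ, N ≤ n → 0 < x n) ∨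
      (∃ N : ℕ, ∀ n : ℕ, N ≤ n → x n < 0)) :
    ∃ N : ℕ, ∀ n : ℕ, N ≤ n → x n * (x (n + 1) - x n) < 0 := by
  have hsol : IsSolution c f x := fun n => by simpa using hx (n + 1) le_add_self
  refine eventually_atTop.1 ?_
  rcases hnonosc with hpos | hneg
  · exact hsol.eventually_mul_sub_neg hc1 hf hsign ha1 hfb (eventually_atTop.2 hpos)
  · have hsign' (t : ℝ) : 0 ≤ t * -f (-t) := by simpa using hsign (-t)
    have hfb' (t : ℝ) (ht : t₀ ≤ |t|) : |-f (-t)| ≤ a * |t| := by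
      simpa using hfb (-t) (by rwa [abs_neg])
    have hpos : ∀ᶠ n in atTop, 0 < -x n :=
      eventually_atTop.2 (hneg.imp fun _ h n hn => neg_pos.2 (h n hn))
    filter_upwards [hsol.neg.eventually_mul_sub_neg hc1 (hf.comp continuous_neg).neg hsign' ha1
      hfb' hpos] with n hn
    linarith

theorem stmt12 (c a t₀ : ℝ) (hc0 : 0 ≤ c) (hc1 : c < 1) (f : ℝ → ℝ)
    (hf : Continuous f) (hsign : ∀ t : ℝ, 0 ≤ t * f t)
    (ht₀ : 0 < t₀) (ha1 : a ≤ 1)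
    (hfb : ∀ t : ℝ, t₀ ≤ |t| → |f t| ≤ a * |t|) (x : ℕ → ℝ)
    (hx : ∀ n : ℕ, 1 ≤ n → x (n + 1) = c * x n + f (x n - x (n - 1)))
    (hnonosc : (∃ N : ℕ, ∀ n : ℕ, N ≤ n → 0 < x n) ∨
      (∃ N : ℕ, ∀ n : ℕ, N ≤ n → x n < 0)) :
    ∃ N : ℕ, ∀ n : ℕ, N ≤ n → x n * (x (n + 1) - x n) < 0 :=
  stmt12_general c a t₀ hc1 f hf hsign ha1 hfb x hx hnonosc
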